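/- arXiv:2202.03174 — 2 statements merged into one kernel-verified Lean document; each statement's English description precedes it below -/
import Mathlib

section
/- Let (X,r) be a left non-degenerate set-theoretic solution of the YBE, M = M(X,r) with its two operations + and ∘, μ the congruence defined by the iterative construction below, and M̄ = M/μ with induced operations and induced automorphisms λ̄_ā. For ā,b̄ ∈ M̄ let c(ā,b̄) denote the unique element of M̄ with ā + b̄ = b̄ + c(ā,b̄). Then the map r̄ : M̄ × M̄ → M̄ × M̄ given by r̄(ā,b̄) = (λ̄_ā(b̄), λ̄^{-1}_{λ̄_ā(b̄)}(c(ā, λ̄_ā(b̄)))) is a left non-degenerate set-theoretic solution of the YBE on M̄; in particular its restriction to the image X̄ of X in M̄ is a left non-degenerate solution on X̄. -/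
open scoped Classical

section YBEDefs

variable {X : Type*}

/-- First component `σ_x(y)` of `r (x, y)`. -/
def ybeSigma (r : X × X → X × X) (x y : X) : X := (r (x, y)).1

/-- Second component `γ_y(x)` of `r (x, y)`. -/
def ybeGamma (r : X × X → X × X) (y x : X) : X := (r (x, y)).2

/-- `r` acting on the first two components of `X³`. -/
def yb12 (r : X × X → X × X) : X × X × X → X × X × X :=
  fun p => ((r (p.1, p.2.1)).1, ((r (p.1, p.2.1)).2, p.2.2))

/-- `r` acting on the last two components of `X³`. -/
def yb23 (r : X × X → X × X) : X × X × X → X × X × X :=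
  fun p => (p.1, r p.2)

/-- `(X, r)` is a set-theoretic solution of the Yang–Baxter equation. -/
def IsYBE (r : X × X → X × X) : Prop :=
  yb12 r ∘ yb23 r ∘ yb12 r = yb23 r ∘ yb12 r ∘ yb23 r

/-- left non-degenerate: all `σ_x` are bijective. -/
def IsLeftND (r : X × X → X × X) : Prop := ∀ x, Function.Bijective (ybeSigma r x)

/-- right non-degenerate: all `γ_y` are bijective. -/
def IsRightND (r : X × X → X × X) : Prop := ∀ y, Function.Bijective (ybeGamma r y)

/-- The defining relations `x∘y = σ_x(y) ∘ γ_y(x)` of the structure monoid. -/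
def structRel (r : X × X → X × X) : FreeMonoid X → FreeMonoid X → Prop :=
  fun a b => ∃ x y : X, a = FreeMonoid.of x * FreeMonoid.of y ∧
    b = FreeMonoid.of (ybeSigma r x y) * FreeMonoid.of (ybeGamma r y x)

/-- The congruence on the free monoid generated by the defining relations. -/
def structCon (r : X × X → X × X) : Con (FreeMonoid X) := conGen (structRel r)

/-- The (multiplicative) structure monoid `M(X, r)`. -/
abbrev SM (r : X × X → X × X) := (structCon r).Quotient

/-- The canonical image of a generator `x ∈ X` in `M(X, r)`. -/
def ofSM (r : X × X → X × X) (x : X) : SM r := (structCon r).mk' (FreeMonoid.of x)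

/-- The left derived solution `r'(x,y) = (y, σ_y γ_{σ_x⁻¹(y)}(x))`. -/
noncomputable def derivedR (r : X × X → X × X) : X × X → X × X := fun p =>
  haveI : Nonempty X := ⟨p.1⟩
  (p.2, ybeSigma r p.2 (ybeGamma r (Function.invFun (ybeSigma r p.1) p.2) p.1))

/-- The defining relations `x + y = y + σ_y γ_{σ_x⁻¹(y)}(x)` of the derived
structure monoid, written additively. -/
def derivedRel (r : X × X → X × X) : FreeAddMonoid X → FreeAddMonoid X → Prop :=
  fun a b => ∃ x y : X, a = FreeAddMonoid.of x + FreeAddMonoid.of y ∧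
    b = FreeAddMonoid.of ((derivedR r (x, y)).1) + FreeAddMonoid.of ((derivedR r (x, y)).2)

/-- The additive congruence generated by the derived relations. -/
noncomputable def derivedAddCon (r : X × X → X × X) : AddCon (FreeAddMonoid X) :=
  addConGen (derivedRel r)

/-- The additive structure monoid `A(X, r) = M(X, r')`. -/
noncomputable abbrev AM (r : X × X → X × X) := (derivedAddCon r).Quotient

/-- The canonical image of a generator `x ∈ X` in `A(X, r)`. -/
noncomputable def ofAM (r : X × X → X × X) (x : X) : AM r :=
  (derivedAddCon r).mk' (FreeAddMonoid.of x)

end YBEDefs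

section MuDefs

variable {X : Type*}

/-- The multiplication `a ∘ b = a + λ'_a(b)` of `M(X,r)` transported to
`A(X,r)` via the identification `π`. -/
noncomputable def opA (r : X × X → X × X) (lam : SM r →* Multiplicative (AddAut (AM r))) (pi : SM r ≃ AM r)
    (a b : AM r) : AM r :=
  a + Multiplicative.toAdd (lam (pi.symm a)) b

/-- The map `λ'` indexed by elements of `A(X,r)` via the identification `π`. -/
noncomputable def lamA (r : X × X → X × X) (lam : SM r →* Multiplicative (AddAut (AM r))) (pi : SM r ≃ AM r)
    (a : AM r) : AddAut (AM r) :=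
  Multiplicative.toAdd (lam (pi.symm a))

/-- The relations `μ₀, μ₁, μ₂, …` of the iterative construction:
`μ₀ = {(a,b) : ∃ c, c + a = c + b}`; `μ_{4m+1}` is the transitive closure of `μ_{4m}`;
`μ_{4m+2} = {((λ'_z)^ε(a∘c), (λ'_z)^ε(b∘c)) : z, c ∈ M, ε ∈ {-1,1}, (a,b) ∈ μ_{4m+1}}`;
`μ_{4m+3}` is the transitive closure of `μ_{4m+2}`;
`μ_{4m+4} = {(c+a+d, c+b+d) : (a,b) ∈ μ_{4m+3}} ∪ {(a,b) : ∃ c, (c+a, c+b) ∈ μ_{4m+3}}`. -/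
def muN (r : X × X → X × X) (lam : SM r →* Multiplicative (AddAut (AM r))) (pi : SM r ≃ AM r) :
    ℕ → AM r → AM r → Prop
  | 0 => fun a b => ∃ c : AM r, c + a = c + b
  | n + 1 =>
    if n % 4 = 0 ∨ n % 4 = 2 then Relation.TransGen (muN r lam pi n)
    else if n % 4 = 1 then
      fun u v => ∃ (z : SM r) (c a b : AM r), muN r lam pi n a b ∧
        ((u = Multiplicative.toAdd (lam z) (opA r lam pi a c) ∧ v = Multiplicative.toAdd (lam z) (opA r lam pi b c)) ∨
         (u = Multiplicative.toAdd (lam z)⁻¹ (opA r lam pi a c) ∧ v = Multiplicative.toAdd (lam z)⁻¹ (opA r lam pi b c)))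
    else
      fun u v =>
        (∃ c d a b : AM r, muN r lam pi n a b ∧ u = c + a + d ∧ v = c + b + d) ∨
        (∃ c : AM r, muN r lam pi n (c + u) (c + v))

/-- `μ = ⋃_{n ≥ 0} μ_n`. -/
def muRel (r : X × X → X × X) (lam : SM r →* Multiplicative (AddAut (AM r))) (pi : SM r ≃ AM r) :
    AM r → AM r → Prop :=
  fun a b => ∃ n, muN r lam pi n a b

end MuDefs


section AuxMu

variable {X : Type*} (r : X × X → X × X) (lam : SM r →* Multiplicative (AddAut (AM r))) (pi : SM r ≃ AM r)

theorem muN_succ_of {n : ℕ} {a b : AM r} (h : muN r lam pi n a b) :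
    muN r lam pi (n + 1) a b := by
  rw [muN]
  split_ifs with h1 h2
  · exact Relation.TransGen.single h
  · refine ⟨1, 0, a, b, h, Or.inl ⟨?_, ?_⟩⟩ <;>
      simp [opA, map_one, map_zero, AddAut.one_apply]
  · exact Or.inl ⟨0, 0, a, b, h, by simp, by simp⟩

theorem muN_mono {n m : ℕ} (hnm : n ≤ m) {a b : AM r} (h : muN r lam pi n a b) :
    muN r lam pi m a b := by
  induction hnm with
  | refl => exact h
  | step _ ih => exact muN_succ_of r lam pi ih

theorem muRel_cancel {c a b : AM r} (h : muRel r lam pi (c + a) (c + b)) :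
    muRel r lam pi a b := by
  obtain ⟨n, hn⟩ := h
  refine ⟨4 * n + 3 + 1, ?_⟩
  rw [muN, if_neg (by omega), if_neg (by omega)]
  exact Or.inr ⟨c, muN_mono r lam pi (by omega) hn⟩

end AuxMu

section AuxAbstract

variable {M : Type*}

/-- abbreviation for the second component of the quotient solution -/
def gamAux (lamb : M → M ≃ M) (cmap : M → M → M) (u v : M) : M :=
  (lamb (lamb u v)).symm (cmap u (lamb u v))

theorem abstract_solution (add : M → M → M) (lamb : M → M ≃ M) (cmap : M → M → M)
    (assoc : ∀ a b c, add (add a b) c = add a (add b c))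
    (lcan : ∀ a b c, add a b = add a c → b = c)
    (lamadd : ∀ u a b, lamb u (add a b) = add (lamb u a) (lamb u b))
    (lamhom : ∀ u v w, lamb (add u (lamb u v)) w = lamb u (lamb v w))
    (hc : ∀ u v, add u v = add v (cmap u v))
    (rbar : M × M → M × M)
    (hrbar : ∀ u v, rbar (u, v) = (lamb u v, gamAux lamb cmap u v)) :
    IsYBE rbar ∧ IsLeftND rbar := by
  have cuniq : ∀ u v t, add u v = add v t → cmap u v = t :=
    fun u v t h => lcan v _ _ ((hc u v).symm.trans h)
  have k5 : ∀ a b d, cmap a (add b d) = cmap (cmap a b) d := by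
    intro a b d
    refine cuniq _ _ _ ?_
    calc add a (add b d) = add (add a b) d := (assoc _ _ _).symm
      _ = add (add b (cmap a b)) d := by rw [← hc]
      _ = add b (add (cmap a b) d) := assoc _ _ _
      _ = add b (add d (cmap (cmap a b) d)) := by rw [← hc]
      _ = add (add b d) (cmap (cmap a b) d) := (assoc _ _ _).symm
  have k6 : ∀ w u v, lamb w (cmap u v) = cmap (lamb w u) (lamb w v) := by
    intro w u v
    refine (cuniq _ _ _ ?_).symm
    rw [← lamadd, ← lamadd, ← hc]
  have γlamb : ∀ u v, lamb (lamb u v) (gamAux lamb cmap u v) = cmap u (lamb u v) := by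
    intro u v; exact Equiv.apply_symm_apply _ _
  have γeq : ∀ u v t, lamb (lamb u v) t = cmap u (lamb u v) → gamAux lamb cmap u v = t := by
    intro u v t h
    have := (γlamb u v).trans h.symm
    exact (lamb (lamb u v)).injective this
  have γop : ∀ u v, add (lamb u v) (lamb (lamb u v) (gamAux lamb cmap u v)) = add u (lamb u v) := by
    intro u v
    rw [γlamb]
    exact (hc u (lamb u v)).symm
  have lamop : ∀ u v w, lamb (lamb u v) (lamb (gamAux lamb cmap u v) w) = lamb u (lamb v w) := by
    intro u v w
    rw [← lamhom (lamb u v) (gamAux lamb cmap u v) w, γop, lamhom]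
  have comp1 : ∀ x y z, lamb (lamb x y) (lamb (gamAux lamb cmap x y) z) = lamb x (lamb y z) :=
    lamop
  have comp2 : ∀ x y z, gamAux lamb cmap (lamb x y) (lamb (gamAux lamb cmap x y) z)
      = lamb (gamAux lamb cmap x (lamb y z)) (gamAux lamb cmap y z) := by
    intro x y z
    refine γeq _ _ _ ?_
    rw [comp1 x y z]
    calc lamb (lamb x (lamb y z)) (lamb (gamAux lamb cmap x (lamb y z)) (gamAux lamb cmap y z))
        = lamb x (lamb (lamb y z) (gamAux lamb cmap y z)) := lamop x (lamb y z) _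
      _ = lamb x (cmap y (lamb y z)) := by rw [γlamb]
      _ = cmap (lamb x y) (lamb x (lamb y z)) := k6 x y (lamb y z)
  have comp3 : ∀ x y z, gamAux lamb cmap (gamAux lamb cmap x y) z
      = gamAux lamb cmap (gamAux lamb cmap x (lamb y z)) (gamAux lamb cmap y z) := by
    intro x y z
    refine (γeq _ _ _ ?_).symm
    -- goal : lamb (lamb D F) (gamAux G z) = cmap D (lamb D F)
    -- where D = gamAux x E, F = gamAux y z, G = gamAux x y, E = lamb y z
    have hK : lamb (lamb x (lamb y z))
        (gamAux lamb cmap (lamb x y) (lamb (gamAux lamb cmap x y) z))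
        = cmap (lamb x y) (lamb x (lamb y z)) := by
      conv_lhs => rw [← comp1 x y z]
      rw [γlamb, comp1 x y z]
    refine (lamb (lamb x (lamb y z))).injective ?_
    have hDF : lamb (gamAux lamb cmap x (lamb y z)) (gamAux lamb cmap y z)
        = gamAux lamb cmap (lamb x y) (lamb (gamAux lamb cmap x y) z) := (comp2 x y z).symm
    rw [hDF]
    calc lamb (lamb x (lamb y z))
          (lamb (gamAux lamb cmap (lamb x y) (lamb (gamAux lamb cmap x y) z))
            (gamAux lamb cmap (gamAux lamb cmap x y) z))
        = lamb (lamb (lamb x y) (lamb (gamAux lamb cmap x y) z))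
            (lamb (gamAux lamb cmap (lamb x y) (lamb (gamAux lamb cmap x y) z))
              (gamAux lamb cmap (gamAux lamb cmap x y) z)) := by rw [comp1 x y z]
      _ = lamb (lamb x y) (lamb (lamb (gamAux lamb cmap x y) z)
              (gamAux lamb cmap (gamAux lamb cmap x y) z)) :=
          lamop (lamb x y) (lamb (gamAux lamb cmap x y) z) _
      _ = lamb (lamb x y) (cmap (gamAux lamb cmap x y) (lamb (gamAux lamb cmap x y) z)) := by
          rw [γlamb]
      _ = cmap (lamb (lamb x y) (gamAux lamb cmap x y))
            (lamb (lamb x y) (lamb (gamAux lamb cmap x y) z)) := k6 _ _ _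
      _ = cmap (cmap x (lamb x y)) (lamb x (lamb y z)) := by rw [γlamb, comp1 x y z]
      _ = cmap x (add (lamb x y) (lamb x (lamb y z))) := (k5 _ _ _).symm
      _ = cmap x (add (lamb x (lamb y z)) (cmap (lamb x y) (lamb x (lamb y z)))) := by
          rw [hc]
      _ = cmap (cmap x (lamb x (lamb y z))) (cmap (lamb x y) (lamb x (lamb y z))) := k5 _ _ _
      _ = cmap (lamb (lamb x (lamb y z)) (gamAux lamb cmap x (lamb y z)))
            (cmap (lamb x y) (lamb x (lamb y z))) := by rw [γlamb]
      _ = cmap (lamb (lamb x (lamb y z)) (gamAux lamb cmap x (lamb y z)))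
            (lamb (lamb x (lamb y z)) (gamAux lamb cmap (lamb x y)
              (lamb (gamAux lamb cmap x y) z))) := by rw [hK]
      _ = lamb (lamb x (lamb y z)) (cmap (gamAux lamb cmap x (lamb y z))
            (gamAux lamb cmap (lamb x y) (lamb (gamAux lamb cmap x y) z))) := (k6 _ _ _).symm
  constructor
  · funext p
    obtain ⟨x, y, z⟩ := p
    simp only [Function.comp_apply, yb12, yb23, hrbar]
    exact Prod.ext (comp1 x y z) (Prod.ext (comp2 x y z) (comp3 x y z))
  · intro u
    have : ybeSigma rbar u = fun v => lamb u v := funext fun v => by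
      rw [ybeSigma, hrbar]
    rw [this]
    exact (lamb u).bijective

end AuxAbstract

/-- On the quotient `M̄ = M/μ` (realized by any surjection `q : M → M̄` whose
fibres are exactly the `μ`-classes, with the induced addition, induced
automorphisms `λ̄`, and `c(x̄, ȳ)` the element with `x̄ + ȳ = ȳ + c(x̄, ȳ)`), the
map `r̄(x̄, ȳ) = (λ̄_x̄(ȳ), λ̄⁻¹_{λ̄_x̄(ȳ)}(c(x̄, λ̄_x̄(ȳ))))` is a left non-degenerate
set-theoretic solution of the YBE; in particular it restricts to a left
non-degenerate solution on the image `X̄` of `X` in `M̄`. -/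
theorem mu_quotient_solution {X : Type*} (r : X × X → X × X)
    (hYBE : IsYBE r) (hLND : IsLeftND r)
(lam : SM r →* Multiplicative (AddAut (AM r)))
    (hlamX : ∀ x y : X, Multiplicative.toAdd (lam (ofSM r x)) (ofAM r y) = ofAM r (ybeSigma r x y))
    (pi : SM r ≃ AM r)
    (hpiX : ∀ x : X, pi (ofSM r x) = ofAM r x)
    (hpi : ∀ a b : SM r, pi (a * b) = pi a + Multiplicative.toAdd (lam a) (pi b))
    (Mb : Type*) (q : AM r → Mb) (hq : Function.Surjective q)
    (hker : ∀ a b : AM r, q a = q b ↔ muRel r lam pi a b)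
    (add : Mb → Mb → Mb)
    (hadd : ∀ a b : AM r, q (a + b) = add (q a) (q b))
    (lamb : Mb → Mb ≃ Mb)
    (hlamb : ∀ a b : AM r, lamb (q a) (q b) = q (lamA r lam pi a b))
    (cmap : Mb → Mb → Mb)
    (hcmap : ∀ u v : Mb, add u v = add v (cmap u v))
    (rbar : Mb × Mb → Mb × Mb)
    (hrbar : ∀ u v : Mb,
      rbar (u, v) = (lamb u v, (lamb (lamb u v)).symm (cmap u (lamb u v)))) :
    IsYBE rbar ∧ IsLeftND rbar ∧
    (∀ x y : X, ∃ x' y' : X,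
      rbar (q (ofAM r x), q (ofAM r y)) = (q (ofAM r x'), q (ofAM r y'))) ∧
    (∀ x : X,
      Set.BijOn (fun v => (rbar (q (ofAM r x), v)).1)
        (Set.range fun t : X => q (ofAM r t))
        (Set.range fun t : X => q (ofAM r t))) := by
    classical
  have hsymmX : ∀ x : X, pi.symm (ofAM r x) = ofSM r x := fun x => by
    rw [← hpiX, Equiv.symm_apply_apply]
  have assoc : ∀ u v w : Mb, add (add u v) w = add u (add v w) := by
    intro u v w
    obtain ⟨a, rfl⟩ := hq u; obtain ⟨b, rfl⟩ := hq v; obtain ⟨c, rfl⟩ := hq w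
    rw [← hadd, ← hadd, ← hadd, ← hadd, add_assoc]
  have lcan : ∀ u a b : Mb, add u a = add u b → a = b := by
    intro u a b hab
    obtain ⟨c, rfl⟩ := hq u; obtain ⟨a, rfl⟩ := hq a; obtain ⟨b, rfl⟩ := hq b
    rw [← hadd, ← hadd] at hab
    exact (hker a b).mpr (muRel_cancel r lam pi ((hker _ _).mp hab))
  have lamadd : ∀ u a b : Mb, lamb u (add a b) = add (lamb u a) (lamb u b) := by
    intro u a b
    obtain ⟨c, rfl⟩ := hq u; obtain ⟨a, rfl⟩ := hq a; obtain ⟨b, rfl⟩ := hq b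
    rw [← hadd, hlamb, hlamb, hlamb, ← hadd]
    congr 1
    exact map_add (Multiplicative.toAdd (lam (pi.symm c))) a b
  have opA_eq : ∀ a b : AM r, opA r lam pi a b = pi (pi.symm a * pi.symm b) := by
    intro a b
    rw [hpi]
    simp [opA, lamA]
  have lamA_opA : ∀ a b d : AM r,
      lamA r lam pi (opA r lam pi a b) d = lamA r lam pi a (lamA r lam pi b d) := by
    intro a b d
    rw [opA_eq]
    simp [lamA, Equiv.symm_apply_apply, map_mul, toAdd_mul, AddAut.add_apply]
  have lamhom : ∀ u v w : Mb, lamb (add u (lamb u v)) w = lamb u (lamb v w) := by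
    intro u v w
    obtain ⟨a, rfl⟩ := hq u; obtain ⟨b, rfl⟩ := hq v; obtain ⟨d, rfl⟩ := hq w
    have h1 : add (q a) (lamb (q a) (q b)) = q (opA r lam pi a b) := by
      rw [hlamb a b, ← hadd]; rfl
    rw [h1, hlamb, lamA_opA, ← hlamb, ← hlamb]
  have cuniq : ∀ u v t : Mb, add u v = add v t → cmap u v = t :=
    fun u v t h => lcan v _ _ ((hcmap u v).symm.trans h)
  obtain ⟨hY, hL⟩ := abstract_solution add lamb cmap assoc lcan lamadd lamhom hcmap rbar hrbar
  have hrel : ∀ x y : X, ofSM r x * ofSM r y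
      = ofSM r (ybeSigma r x y) * ofSM r (ybeGamma r y x) := by
    intro x y
    have h : structCon r (FreeMonoid.of x * FreeMonoid.of y)
        (FreeMonoid.of (ybeSigma r x y) * FreeMonoid.of (ybeGamma r y x)) :=
      ConGen.Rel.of _ _ ⟨x, y, rfl, rfl⟩
    calc ofSM r x * ofSM r y
        = (structCon r).mk' (FreeMonoid.of x * FreeMonoid.of y) := (map_mul _ _ _).symm
      _ = (structCon r).mk'
          (FreeMonoid.of (ybeSigma r x y) * FreeMonoid.of (ybeGamma r y x)) :=
          (Con.eq _).mpr h
      _ = _ := map_mul _ _ _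
  have hAM : ∀ x y : X, ofAM r x + ofAM r (ybeSigma r x y)
      = ofAM r (ybeSigma r x y)
        + Multiplicative.toAdd (lam (ofSM r (ybeSigma r x y))) (ofAM r (ybeGamma r y x)) := by
    intro x y
    have h := congrArg pi (hrel x y)
    rw [hpi, hpi, hpiX, hpiX, hpiX, hpiX, hlamX] at h
    exact h
  have hlambX : ∀ x y : X,
      lamb (q (ofAM r x)) (q (ofAM r y)) = q (ofAM r (ybeSigma r x y)) := by
    intro x y
    rw [hlamb]
    congr 1
    simp only [lamA, hsymmX, hlamX]
  refine ⟨hY, hL, ?_, ?_⟩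
  · intro x y
    refine ⟨ybeSigma r x y, ybeGamma r y x, ?_⟩
    rw [hrbar, hlambX x y]
    refine Prod.ext rfl ?_
    show (lamb (q (ofAM r (ybeSigma r x y)))).symm
        (cmap (q (ofAM r x)) (q (ofAM r (ybeSigma r x y))))
        = q (ofAM r (ybeGamma r y x))
    rw [Equiv.symm_apply_eq]
    refine cuniq _ _ _ ?_
    have h2 : lamb (q (ofAM r (ybeSigma r x y))) (q (ofAM r (ybeGamma r y x)))
        = q (Multiplicative.toAdd (lam (ofSM r (ybeSigma r x y))) (ofAM r (ybeGamma r y x))) := by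
      rw [hlamb]
      congr 1
      simp only [lamA, hsymmX]
    rw [h2, ← hadd, ← hadd, hAM x y]
  · intro x
    have hf : ∀ v, (rbar (q (ofAM r x), v)).1 = lamb (q (ofAM r x)) v := fun v => by
      rw [hrbar]
    refine ⟨?_, ?_, ?_⟩
    · rintro v ⟨y, rfl⟩
      refine ⟨ybeSigma r x y, ?_⟩
      show q (ofAM r (ybeSigma r x y)) = (rbar (q (ofAM r x), q (ofAM r y))).1
      rw [hf, hlambX]
    · intro v _ w _ hvw
      simp only [hf] at hvw
      exact (lamb (q (ofAM r x))).injective hvw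
    · rintro v ⟨t, rfl⟩
      obtain ⟨y, hy⟩ := (hLND x).2 t
      refine ⟨q (ofAM r y), ⟨y, rfl⟩, ?_⟩
      show (rbar (q (ofAM r x), q (ofAM r y))).1 = q (ofAM r t)
      rw [hf, hlambX, hy]
end

section
/- Let (X,r) be a bijective left and right non-degenerate set-theoretic solution of the YBE and M = M(X,r) with its two operations + and ∘. Let ν₀ = {(a,b) ∈ M × M : ∃c ∈ M, c∘a = c∘b}. Then for every z ∈ M, ν₀ = {(λ'_z(a), λ'_z(b)) : (a,b) ∈ ν₀} = {((λ'_z)^{-1}(a), (λ'_z)^{-1}(b)) : (a,b) ∈ ν₀}. -/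
open scoped Classical

/-- The multiplicative group structure on `AddAut A` (composition), as in the older Mathlib. -/
instance addAutGroupOld {A : Type*} [Add A] : Group (AddAut A) where
  mul g h := AddEquiv.trans h g
  one := AddEquiv.refl _
  inv := AddEquiv.symm
  mul_assoc _ _ _ := rfl
  one_mul _ := rfl
  mul_one _ := rfl
  inv_mul_cancel := AddEquiv.self_trans_symm

theorem addAutOld_one_apply {A : Type*} [Add A] (a : A) : (1 : AddAut A) a = a := rfl

theorem addAutOld_mul_apply {A : Type*} [Add A] (e₁ e₂ : AddAut A) (a : A) :
    (e₁ * e₂) a = e₁ (e₂ a) := rfl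

section AuxLemmas

variable {X : Type*} {r : X × X → X × X}

private lemma ybe_E1 (hYBE : IsYBE r) (a y z : X) :
    ybeSigma r (ybeSigma r a y) (ybeSigma r (ybeGamma r y a) z)
      = ybeSigma r a (ybeSigma r y z) := by
  have h := congrArg Prod.fst (congrFun hYBE (a, y, z))
  simpa [yb12, yb23, ybeSigma, ybeGamma, Function.comp] using h

/-- Surjectivity of the diagonal map: every `y` is `σ_x⁻¹(x)` for some `x`. -/
private lemma q_surj (hYBE : IsYBE r) (hLND : IsLeftND r) (hRND : IsRightND r)
    (y : X) : ∃ x : X, ybeSigma r x y = x := by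
  obtain ⟨a, ha⟩ := (hRND y).2 y
  obtain ⟨w, hw⟩ := (hLND y).2 y
  refine ⟨ybeSigma r a y, ?_⟩
  have h := ybe_E1 hYBE a y w
  rw [ha, hw] at h
  exact h

variable (lam : SM r →* AddAut (AM r)) (pi : SM r ≃ AM r)

private lemma pi_one (hpi : ∀ a b : SM r, pi (a * b) = pi a + lam a (pi b)) :
    pi (1 : SM r) = 0 := by
  have h := hpi 1 (pi.symm 0)
  simp only [one_mul, Equiv.apply_symm_apply, map_one, addAutOld_one_apply, add_zero] at h
  exact h.symm

private lemma lam_gen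
    (hlamX : ∀ x y : X, lam (ofSM r x) (ofAM r y) = ofAM r (ybeSigma r x y)) :
    ∀ (z : SM r) (y : X), ∃ y' : X, lam z (ofAM r y) = ofAM r y' := by
  intro z
  induction z using Con.induction_on with
  | H w =>
    induction w using FreeMonoid.inductionOn' with
    | one =>
      intro y
      refine ⟨y, ?_⟩
      have h1 : ((1 : FreeMonoid X) : SM r) = 1 := rfl
      rw [h1, map_one, addAutOld_one_apply]
    | of_mul x w ih =>
      intro y
      obtain ⟨y₁, hy₁⟩ := ih y
      have h1 : ((FreeMonoid.of x * w : FreeMonoid X) : SM r) = ofSM r x * (w : SM r) := rfl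
      refine ⟨ybeSigma r x y₁, ?_⟩
      rw [h1, map_mul, addAutOld_mul_apply, hy₁, hlamX]

private lemma psi_surj (hYBE : IsYBE r) (hLND : IsLeftND r) (hRND : IsRightND r)
    (hlamX : ∀ x y : X, lam (ofSM r x) (ofAM r y) = ofAM r (ybeSigma r x y))
    (hpiX : ∀ x : X, pi (ofSM r x) = ofAM r x)
    (hpi : ∀ a b : SM r, pi (a * b) = pi a + lam a (pi b)) :
    ∀ d : AM r, ∃ c : SM r, (lam c).symm (pi c) = d := by
  have key : ∀ l : List X, ∀ z : SM r, ∃ c : SM r,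
      (lam c).symm (pi c) = lam z ((derivedAddCon r).mk' (FreeAddMonoid.ofList l)) := by
    intro l
    induction l using List.reverseRecOn with
    | nil =>
      intro z
      refine ⟨1, ?_⟩
      rw [pi_one lam pi hpi, map_zero]
      have h0 : (FreeAddMonoid.ofList ([] : List X)) = 0 := rfl
      rw [h0, map_zero, map_zero]
    | append_singleton l y ih =>
      intro z
      obtain ⟨y₁, hy₁⟩ := lam_gen lam hlamX z y
      obtain ⟨x, hx⟩ := q_surj hYBE hLND hRND y₁
      obtain ⟨c, hc⟩ := ih (ofSM r x * z)
      refine ⟨c * ofSM r x, ?_⟩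
      have hofl : FreeAddMonoid.ofList (l ++ [y]) =
          FreeAddMonoid.ofList l + FreeAddMonoid.of y := FreeAddMonoid.ofList_append l [y]
      have hinvx : (lam (ofSM r x)).symm (ofAM r x) = ofAM r y₁ := by
        have := hlamX x y₁
        rw [hx] at this
        rw [← this, AddEquiv.symm_apply_apply]
      rw [hpi, map_mul, hpiX]
      have hmulsymm : ∀ t, (lam c * lam (ofSM r x)).symm t
          = (lam (ofSM r x)).symm ((lam c).symm t) := fun _ => rfl
      have hofy : (derivedAddCon r).mk' (FreeAddMonoid.of y) = ofAM r y := rfl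
      rw [hmulsymm, map_add, AddEquiv.symm_apply_apply, hc, hofl,
        map_add ((derivedAddCon r).mk') (FreeAddMonoid.ofList l) (FreeAddMonoid.of y),
        hofy, map_add (lam z) ((derivedAddCon r).mk' (FreeAddMonoid.ofList l)) (ofAM r y),
        hy₁]
      have hmul2 : lam (ofSM r x * z) = lam (ofSM r x) * lam z := map_mul lam _ _
      rw [hmul2, addAutOld_mul_apply, map_add ((lam (ofSM r x)).symm),
        AddEquiv.symm_apply_apply, hinvx]
  intro d
  obtain ⟨w, hw⟩ := AddCon.mk'_surjective (c := derivedAddCon r) d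
  obtain ⟨c, hc⟩ := key (FreeAddMonoid.toList w) 1
  refine ⟨c, ?_⟩
  rw [hc, map_one, addAutOld_one_apply, FreeAddMonoid.ofList_toList, hw]

private lemma nu_iff (hYBE : IsYBE r) (hLND : IsLeftND r) (hRND : IsRightND r)
    (hlamX : ∀ x y : X, lam (ofSM r x) (ofAM r y) = ofAM r (ybeSigma r x y))
    (hpiX : ∀ x : X, pi (ofSM r x) = ofAM r x)
    (hpi : ∀ a b : SM r, pi (a * b) = pi a + lam a (pi b))
    (u v : SM r) :
    (∃ c : SM r, c * u = c * v) ↔ ∃ d : AM r, d + pi u = d + pi v := by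
  constructor
  · rintro ⟨c, hc⟩
    refine ⟨(lam c).symm (pi c), ?_⟩
    have h := congrArg pi hc
    rw [hpi, hpi] at h
    have h2 := congrArg (lam c).symm h
    simpa only [map_add, AddEquiv.symm_apply_apply] using h2
  · rintro ⟨d, hd⟩
    obtain ⟨c, hc⟩ := psi_surj lam pi hYBE hLND hRND hlamX hpiX hpi d
    refine ⟨c, pi.injective ?_⟩
    rw [hpi, hpi]
    have h := congrArg (lam c) hd
    rw [map_add, map_add] at h
    have hcd : lam c d = pi c := by
      rw [← hc]; exact (lam c).apply_symm_apply (pi c)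
    rw [hcd] at h
    exact h

private lemma set_inv (hYBE : IsYBE r) (hLND : IsLeftND r) (hRND : IsRightND r)
    (hlamX : ∀ x y : X, lam (ofSM r x) (ofAM r y) = ofAM r (ybeSigma r x y))
    (hpiX : ∀ x : X, pi (ofSM r x) = ofAM r x)
    (hpi : ∀ a b : SM r, pi (a * b) = pi a + lam a (pi b))
    (e : AddAut (AM r)) :
    {p : SM r × SM r | ∃ c : SM r, c * p.1 = c * p.2} =
      {p : SM r × SM r | ∃ a b : SM r, (∃ c : SM r, c * a = c * b) ∧
        p = (pi.symm (e (pi a)), pi.symm (e (pi b)))} := by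
  have NI := nu_iff lam pi hYBE hLND hRND hlamX hpiX hpi
  ext ⟨u, v⟩
  simp only [Set.mem_setOf_eq]
  constructor
  · intro h
    refine ⟨pi.symm (e.symm (pi u)), pi.symm (e.symm (pi v)), ?_, ?_⟩
    · rw [NI]
      obtain ⟨d, hd⟩ := (NI u v).1 h
      refine ⟨e.symm d, ?_⟩
      rw [Equiv.apply_symm_apply, Equiv.apply_symm_apply]
      simpa only [map_add] using congrArg e.symm hd
    · have h1 : pi.symm (e (pi (pi.symm (e.symm (pi u))))) = u := by
        rw [Equiv.apply_symm_apply, AddEquiv.apply_symm_apply, Equiv.symm_apply_apply]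
      have h2 : pi.symm (e (pi (pi.symm (e.symm (pi v))))) = v := by
        rw [Equiv.apply_symm_apply, AddEquiv.apply_symm_apply, Equiv.symm_apply_apply]
      rw [h1, h2]
  · rintro ⟨a, b, hab, hp⟩
    have h1 : u = pi.symm (e (pi a)) := congrArg Prod.fst hp
    have h2 : v = pi.symm (e (pi b)) := congrArg Prod.snd hp
    subst h1; subst h2
    rw [NI]
    obtain ⟨d, hd⟩ := (NI a b).1 hab
    refine ⟨e d, ?_⟩
    rw [Equiv.apply_symm_apply, Equiv.apply_symm_apply]
    simpa only [map_add] using congrArg e hd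

end AuxLemmas


/-- For a bijective left and right non-degenerate solution, the relation
`ν₀ = {(a,b) : ∃ c, c∘a = c∘b}` is invariant under every `λ'_z` and its
inverse (transported to `M` via `π`). -/
theorem nu0_invariant {X : Type*} (r : X × X → X × X)
    (hYBE : IsYBE r) (hLND : IsLeftND r) (hRND : IsRightND r)
    (hbij : Function.Bijective r)
(lam : SM r →* AddAut (AM r))
    (hlamX : ∀ x y : X, lam (ofSM r x) (ofAM r y) = ofAM r (ybeSigma r x y))
    (pi : SM r ≃ AM r)
    (hpiX : ∀ x : X, pi (ofSM r x) = ofAM r x)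
    (hpi : ∀ a b : SM r, pi (a * b) = pi a + lam a (pi b)) :
    ∀ z : SM r,
      ({p : SM r × SM r | ∃ c : SM r, c * p.1 = c * p.2} =
        {p : SM r × SM r | ∃ a b : SM r, (∃ c : SM r, c * a = c * b) ∧
          p = (pi.symm (lam z (pi a)), pi.symm (lam z (pi b)))}) ∧
      ({p : SM r × SM r | ∃ c : SM r, c * p.1 = c * p.2} =
        {p : SM r × SM r | ∃ a b : SM r, (∃ c : SM r, c * a = c * b) ∧
          p = (pi.symm ((lam z)⁻¹ (pi a)), pi.symm ((lam z)⁻¹ (pi b)))}) := by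
  intro z
  have hinv : ∀ x y : X, lam (ofSM r x) (ofAM r y) = ofAM r (ybeSigma r x y) := hlamX
  exact ⟨set_inv lam pi hYBE hLND hRND hlamX hpiX hpi (lam z),
    set_inv lam pi hYBE hLND hRND hlamX hpiX hpi ((lam z)⁻¹)⟩
end
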